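/- Let H be a complex inner product space, r a positive integer, and w₁, …, w_r vectors in H whose Gram matrix F, defined by F_{jk} := ⟨w_j, w_k⟩, satisfies ‖F − I‖_max ≤ 1/(3r²). Then there exists an r×r complex Hermitian matrix G with ‖G − I‖_max ≤ ‖F − I‖_max such that the vectors f_k := Σ_{l=1}^r G_{lk} w_l, for k = 1, …, r, form an orthonormal family: ⟨f_k, f_{k'}⟩ = δ_{kk'} for all k, k'. -/

import Mathlib

/-- The max matrix norm `‖F‖_max = max_{j,k} |F_{jk}|` of a complex `r × r` matrix. -/
noncomputable def maxNorm {r : ℕ} (F : Matrix (Fin r) (Fin r) ℂ) : ℝ :=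
  ⨆ j : Fin r, ⨆ k : Fin r, ‖F j k‖

/-!
Write `F = 1 + E` and take `G = (1 + E)^{-1/2}`, given by the binomial series
`∑ₙ binom(-1/2, n) Eⁿ`. It converges since the maximal row sum of `E` is at most
`r ‖E‖_max ≤ 1/3`, and by Chu–Vandermonde its Cauchy square is `∑ₙ binom(-1, n) Eⁿ = (1 + E)⁻¹`,
so `G F G = 1`; as the Gram matrix of the `f_k` is `Gᴴ F G`, they are orthonormal.
Entrywise, `|(Eⁿ⁺¹)_{jk}| ≤ ε (r ε)ⁿ` with `ε = ‖E‖_max` and `|binom(-1/2, n + 1)| ≤ 1/2`, so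
`|(G - 1)_{jk}| ≤ (ε / 2) / (1 - r ε) ≤ ε`.
-/

open Finset
open scoped Matrix

namespace Ring

open Polynomial in
theorem choose_succ_right_eq {R : Type*} [Field R] [CharZero R] (a : R) (k : ℕ) :
    choose a (k + 1) = choose a k * (a - k) / (k + 1) := by
  rw [choose_eq_smul, choose_eq_smul, descPochhammer_succ_right, smeval_mul, smeval_sub,
    smeval_X, smeval_natCast, Nat.factorial_succ]
  simp only [npow_one, npow_zero, smul_eq_mul, Nat.cast_mul, Nat.cast_succ, nsmul_eq_mul, mul_one]
  field_simp

theorem choose_neg_one {R : Type*} [Field R] [CharZero R] (n : ℕ) :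
    choose (-1 : R) n = (-1) ^ n := by
  rw [choose_neg, add_sub_cancel_left, choose_natCast, Nat.choose_self, Nat.cast_one]
  simp [Int.negOnePow, Units.smul_def]

theorem abs_choose_neg_half_succ_le (n : ℕ) : |choose (-(1 / 2) : ℝ) (n + 1)| ≤ 1 / 2 := by
  induction n with
  | zero => norm_num [choose_one_right]
  | succ n ih =>
    rw [choose_succ_right_eq, abs_div, abs_mul,
      abs_of_pos (by positivity : (0 : ℝ) < (n + 1 : ℕ) + 1),
      abs_of_neg (by push_cast; linarith : -(1 / 2 : ℝ) - (n + 1 : ℕ) < 0),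
      div_le_iff₀ (by positivity)]
    push_cast
    nlinarith [abs_nonneg (choose (-(1 / 2) : ℝ) (n + 1))]

theorem abs_choose_neg_half_le (n : ℕ) : |choose (-(1 / 2) : ℝ) n| ≤ 1 := by
  cases n with
  | zero => simp
  | succ n => linarith [abs_choose_neg_half_succ_le n]

theorem sum_antidiagonal_choose_neg_half_mul (n : ℕ) :
    ∑ ij ∈ antidiagonal n, choose (-(1 / 2) : ℝ) ij.1 * choose (-(1 / 2) : ℝ) ij.2 =
      (-1) ^ n := by
  rw [← add_choose_eq n (Commute.all _ _), ← choose_neg_one]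
  norm_num

end Ring

section InvSqrtOneAdd

variable {A : Type*} [NormedRing A] [NormedAlgebra ℝ A]

noncomputable def invSqrtOneAdd (x : A) : A :=
  ∑' n, Ring.choose (-(1 / 2) : ℝ) n • x ^ n

theorem summable_norm_choose_neg_half_smul_pow {x : A} (hx : ‖x‖ < 1) :
    Summable fun n ↦ ‖Ring.choose (-(1 / 2) : ℝ) n • x ^ n‖ :=
  (summable_norm_geometric_of_norm_lt_one hx).of_nonneg_of_le (fun _ ↦ norm_nonneg _) fun n ↦ by
    rw [norm_smul, Real.norm_eq_abs]
    exact mul_le_of_le_one_left (norm_nonneg _) (Ring.abs_choose_neg_half_le n)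

theorem commute_one_add_invSqrtOneAdd (x : A) : Commute (1 + x) (invSqrtOneAdd x) :=
  Commute.tsum_right _ fun n ↦
    ((Commute.one_left _).add_left ((Commute.refl x).pow_right n)).smul_right _

variable [CompleteSpace A] {x : A}

theorem invSqrtOneAdd_mul_self (hx : ‖x‖ < 1) :
    invSqrtOneAdd x * invSqrtOneAdd x = ∑' n, (-x) ^ n := by
  have h := summable_norm_choose_neg_half_smul_pow hx
  rw [invSqrtOneAdd, tsum_mul_tsum_eq_tsum_sum_antidiagonal_of_summable_norm h h]
  congr 1 with n
  calc _ = ∑ ij ∈ antidiagonal n,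
          (Ring.choose (-(1 / 2) : ℝ) ij.1 * Ring.choose (-(1 / 2) : ℝ) ij.2) • x ^ n :=
        sum_congr rfl fun ij hij ↦ by rw [smul_mul_smul_comm, ← pow_add, mem_antidiagonal.mp hij]
    _ = (-x) ^ n := by
      rw [← sum_smul, Ring.sum_antidiagonal_choose_neg_half_mul, ← smul_pow, neg_one_smul]

theorem invSqrtOneAdd_mul_self_mul_one_add (hx : ‖x‖ < 1) :
    invSqrtOneAdd x * invSqrtOneAdd x * (1 + x) = 1 := by
  rw [invSqrtOneAdd_mul_self hx, ← sub_neg_eq_add, geom_series_mul_neg (-x) (by rwa [norm_neg])]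

theorem invSqrtOneAdd_mul_one_add_mul_self (hx : ‖x‖ < 1) :
    invSqrtOneAdd x * (1 + x) * invSqrtOneAdd x = 1 := by
  rw [mul_assoc, (commute_one_add_invSqrtOneAdd x).eq, ← mul_assoc,
    invSqrtOneAdd_mul_self_mul_one_add hx]

end InvSqrtOneAdd

namespace Matrix

theorem gram_sum_smul {𝕜 E ι κ : Type*} [RCLike 𝕜] [SeminormedAddCommGroup E]
    [InnerProductSpace 𝕜 E] [Fintype ι] (v : ι → E) (G : Matrix ι κ 𝕜) :
    gram 𝕜 (fun k ↦ ∑ l, G l k • v l) = Gᴴ * gram 𝕜 v * G := by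
  ext k k'
  rw [gram_apply, ← star_dotProduct_gram_mulVec]
  simp only [dotProduct, mulVec, mul_apply, Finset.mul_sum, Finset.sum_mul, mul_assoc,
    conjTranspose_apply, Pi.star_apply]
  exact Finset.sum_comm

attribute [local instance] Matrix.linftyOpSeminormedAddCommGroup Matrix.linftyOpNormedRing
  Matrix.linftyOpNormedAlgebra

variable {m : Type*} [Fintype m] {ε : ℝ}

theorem linfty_opNorm_le_card_mul {n α : Type*} [Fintype n] [SeminormedAddCommGroup α]
    {E : Matrix m n α} (hε : 0 ≤ ε) (hE : ∀ j k, ‖E j k‖ ≤ ε) : ‖E‖ ≤ Fintype.card n * ε := by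
  rw [linfty_opNorm_def, ← NNReal.coe_mk _ (by positivity : 0 ≤ (Fintype.card n : ℝ) * ε),
    NNReal.coe_le_coe]
  refine Finset.sup_le fun j _ ↦ ?_
  rw [← NNReal.coe_le_coe, NNReal.coe_sum, NNReal.coe_mk]
  simpa using Finset.sum_le_sum fun k (_ : k ∈ univ) ↦ hE j k

variable [DecidableEq m]

theorem norm_pow_succ_apply_le {α : Type*} [NormedRing α] {E : Matrix m m α} (hε : 0 ≤ ε)
    (hE : ∀ j k, ‖E j k‖ ≤ ε) (n : ℕ) (j k : m) :
    ‖(E ^ (n + 1)) j k‖ ≤ ε * (Fintype.card m * ε) ^ n := by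
  induction n generalizing j k with
  | zero => simpa using hE j k
  | succ n ih =>
    rw [pow_succ', mul_apply]
    calc ‖∑ l, E j l * (E ^ (n + 1)) l k‖
        ≤ ∑ l, ‖E j l‖ * ‖(E ^ (n + 1)) l k‖ := norm_sum_le_of_le _ fun l _ ↦ norm_mul_le _ _
      _ ≤ ∑ _l : m, ε * (ε * (Fintype.card m * ε) ^ n) :=
        sum_le_sum fun l _ ↦ mul_le_mul (hE j l) (ih l k) (norm_nonneg _) hε
      _ = ε * (Fintype.card m * ε) ^ (n + 1) := by
        simp only [sum_const, card_univ, nsmul_eq_mul]; ring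

variable {𝕜 : Type*} [RCLike 𝕜]

/- The ℓ∞-operator topology is not reducibly the product topology, so entries are taken through a
linear map that is continuous by finite-dimensionality. -/
theorem hasSum_invSqrtOneAdd_apply {E : Matrix m m 𝕜} (hE : ‖E‖ < 1) (j k : m) :
    HasSum (fun n ↦ Ring.choose (-(1 / 2) : ℝ) n • (E ^ n) j k) (invSqrtOneAdd E j k) :=
  (summable_norm_choose_neg_half_smul_pow hE).of_norm.hasSum.map (entryLinearMap 𝕜 𝕜 j k)
    (entryLinearMap 𝕜 𝕜 j k).continuous_of_finiteDimensional

theorem isHermitian_invSqrtOneAdd {E : Matrix m m 𝕜} (hE : E.IsHermitian) (hE1 : ‖E‖ < 1) :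
    (invSqrtOneAdd E).IsHermitian :=
  ext fun j k ↦ (hasSum_invSqrtOneAdd_apply hE1 k j).star.unique <| by
    simpa only [star_smul, star_trivial, ← conjTranspose_apply, (hE.pow _).eq]
      using hasSum_invSqrtOneAdd_apply hE1 j k

theorem norm_invSqrtOneAdd_sub_one_apply_le {E : Matrix m m 𝕜} (hε : 0 ≤ ε)
    (hE : ∀ j k, ‖E j k‖ ≤ ε) (hsmall : Fintype.card m * ε ≤ 1 / 3) (j k : m) :
    ‖(invSqrtOneAdd E - 1) j k‖ ≤ ε := by
  set ρ := Fintype.card m * ε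
  have hρ : 0 ≤ ρ := by positivity
  have hjk : HasSum (fun n ↦ Ring.choose (-(1 / 2) : ℝ) (n + 1) • (E ^ (n + 1)) j k)
      ((invSqrtOneAdd E - 1) j k) := by
    have h := hasSum_invSqrtOneAdd_apply ((linfty_opNorm_le_card_mul hε hE).trans_lt
      (by linarith)) j k
    simpa [Ring.choose_zero_right, one_apply] using (hasSum_nat_add_iff' 1).mpr h
  have hgeom : HasSum (fun n ↦ ε / 2 * ρ ^ n) (ε / 2 * (1 - ρ)⁻¹) :=
    (hasSum_geometric_of_lt_one hρ (by linarith)).mul_left _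
  calc ‖(invSqrtOneAdd E - 1) j k‖ ≤ ε / 2 * (1 - ρ)⁻¹ :=
        hjk.norm_le_of_bounded hgeom fun n ↦ by
          rw [norm_smul, Real.norm_eq_abs]
          calc _ ≤ 1 / 2 * (ε * ρ ^ n) := mul_le_mul (Ring.abs_choose_neg_half_succ_le n)
                (norm_pow_succ_apply_le hε hE n j k) (norm_nonneg _) (by norm_num)
            _ = ε / 2 * ρ ^ n := by ring
    _ ≤ ε := by
      rw [mul_inv_le_iff₀ (by linarith)]
      nlinarith

theorem exists_isHermitian_mul_one_add_mul_eq_one {E : Matrix m m 𝕜} (hE : E.IsHermitian)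
    (hε : 0 ≤ ε) (hent : ∀ j k, ‖E j k‖ ≤ ε) (hsmall : Fintype.card m * ε ≤ 1 / 3) :
    ∃ G : Matrix m m 𝕜, G.IsHermitian ∧ (∀ j k, ‖(G - 1) j k‖ ≤ ε) ∧ G * (1 + E) * G = 1 := by
  have hE1 : ‖E‖ < 1 := (linfty_opNorm_le_card_mul hε hent).trans_lt (by linarith)
  exact ⟨invSqrtOneAdd E, isHermitian_invSqrtOneAdd hE hE1,
    norm_invSqrtOneAdd_sub_one_apply_le hε hent hsmall, invSqrtOneAdd_mul_one_add_mul_self hE1⟩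

end Matrix

section MaxNorm

variable {r : ℕ}

theorem norm_apply_le_maxNorm (F : Matrix (Fin r) (Fin r) ℂ) (j k : Fin r) :
    ‖F j k‖ ≤ maxNorm F :=
  (le_ciSup (f := fun k ↦ ‖F j k‖) (Set.finite_range _).bddAbove k).trans
    (le_ciSup (f := fun j ↦ ⨆ k, ‖F j k‖) (Set.finite_range _).bddAbove j)

theorem maxNorm_nonneg (F : Matrix (Fin r) (Fin r) ℂ) : 0 ≤ maxNorm F :=
  Real.iSup_nonneg fun _ ↦ Real.iSup_nonneg fun _ ↦ norm_nonneg _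

theorem maxNorm_le {F : Matrix (Fin r) (Fin r) ℂ} {b : ℝ} (hb : 0 ≤ b) (h : ∀ j k, ‖F j k‖ ≤ b) : maxNorm F ≤ b :=
  Real.iSup_le (fun j ↦ Real.iSup_le (h j) hb) hb

end MaxNorm

theorem stmt_1_general {H : Type*} [NormedAddCommGroup H] [InnerProductSpace ℂ H]
    {r : ℕ} (w : Fin r → H)
    (F : Matrix (Fin r) (Fin r) ℂ)
    (hF : ∀ j k, F j k = @inner ℂ H _ (w j) (w k))
    (hsmall : maxNorm (F - 1) ≤ 1 / (3 * (r : ℝ) ^ 2)) :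
    ∃ G : Matrix (Fin r) (Fin r) ℂ, G.IsHermitian ∧
      maxNorm (G - 1) ≤ maxNorm (F - 1) ∧
      ∀ k k' : Fin r,
        @inner ℂ H _ (∑ l, G l k • w l) (∑ l, G l k' • w l)
          = if k = k' then 1 else 0 := by
  have hgram : Matrix.gram ℂ w = F := Matrix.ext fun j k ↦ (hF j k).symm
  have hε := maxNorm_nonneg (F - 1)
  have hcard : Fintype.card (Fin r) * maxNorm (F - 1) ≤ 1 / 3 := by
    rw [Fintype.card_fin]
    calc (r : ℝ) * maxNorm (F - 1) ≤ r ^ 2 * (1 / (3 * r ^ 2)) :=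
          mul_le_mul (by exact_mod_cast Nat.le_self_pow two_ne_zero r) hsmall hε (by positivity)
      _ = r ^ 2 / r ^ 2 * (1 / 3) := by ring
      _ ≤ 1 / 3 := mul_le_of_le_one_left (by norm_num) (div_self_le_one _)
  obtain ⟨G, hG, hGent, hGFG⟩ := Matrix.exists_isHermitian_mul_one_add_mul_eq_one
    (hgram ▸ (Matrix.isHermitian_gram ℂ w).sub Matrix.isHermitian_one) hε
    (norm_apply_le_maxNorm _) hcard
  rw [add_sub_cancel] at hGFG
  refine ⟨G, hG, maxNorm_le hε hGent, fun k k' ↦ ?_⟩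
  rw [← Matrix.gram_apply (𝕜 := ℂ) (fun k ↦ ∑ l, G l k • w l), Matrix.gram_sum_smul, hG.eq,
    hgram, hGFG, Matrix.one_apply]

/-- If the Gram matrix `F_{jk} = ⟨w_j, w_k⟩` of vectors `w₁, …, w_r` in a complex inner
product space satisfies `‖F - I‖_max ≤ 1/(3r²)`, then there exists a Hermitian matrix `G`
with `‖G - I‖_max ≤ ‖F - I‖_max` such that the vectors `f_k := ∑_l G_{lk} w_l` form an
orthonormal family. -/
theorem stmt_1 {H : Type*} [NormedAddCommGroup H] [InnerProductSpace ℂ H]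
    {r : ℕ} (hr : 0 < r) (w : Fin r → H)
    (F : Matrix (Fin r) (Fin r) ℂ)
    (hF : ∀ j k, F j k = @inner ℂ H _ (w j) (w k))
    (hsmall : maxNorm (F - 1) ≤ 1 / (3 * (r : ℝ) ^ 2)) :
    ∃ G : Matrix (Fin r) (Fin r) ℂ, G.IsHermitian ∧
      maxNorm (G - 1) ≤ maxNorm (F - 1) ∧
      ∀ k k' : Fin r,
        @inner ℂ H _ (∑ l, G l k • w l) (∑ l, G l k' • w l)
          = if k = k' then 1 else 0 :=
  stmt_1_general w F hF hsmall
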